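/- arXiv:1606.07243 — 2 statements merged into one kernel-verified Lean document; each statement's English description precedes it below -/
import Mathlib

section
/- Let F ∈ L¹((0,∞); ℂ) and suppose ∫₀^∞ F(t) e^{−μ t} dt = 0 for all μ > 0. Then F = 0 almost everywhere on (0,∞). -/
open MeasureTheory Complex

/-!
Since `F` is integrable, so is `f t = F t * exp (-t)` on `(0, ∞)`, and the hypothesis says that the
moments `∫ (exp (-t)) ^ n • f t` all vanish (they are the Laplace transform of `F` at `n + 1`).
As `exp (-t)` takes values in `[0, 1]`, Weierstrass approximation upgrades this to
`∫ g (exp (-t)) • f t = 0` for every continuous `g`. For a smooth test function `ψ` supported in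
`(0, ∞)`, `g = ψ ∘ (-log)` is continuous and `g (exp (-t)) = ψ t`, so `f` vanishes as a
distribution on `(0, ∞)`, hence almost everywhere there, and so does `F`.
-/

theorem HasCompactSupport.continuous_comp_neg_log {β : Type*} [TopologicalSpace β] [Zero β]
    {ψ : ℝ → β} (hsupp : HasCompactSupport ψ) (hψ : Continuous ψ) (hψ0 : ψ 0 = 0) :
    Continuous fun x => ψ (-Real.log x) := by
  refine continuous_iff_continuousAt.mpr fun x => ?_
  rcases eq_or_ne x 0 with rfl | hx
  · rw [← continuousWithinAt_compl_self, ContinuousWithinAt, Real.log_zero, neg_zero, hψ0]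
    exact hsupp.is_zero_at_infty.comp <| atTop_le_cocompact.trans' <|
      Filter.tendsto_neg_atTop_iff.mpr Real.tendsto_log_nhdsNE_zero
  · exact hψ.continuousAt.comp (Real.continuousAt_log hx).neg

namespace MeasureTheory

section Moments

variable {α E : Type*} [MeasurableSpace α] {μ : Measure α} [NormedAddCommGroup E]
  [NormedSpace ℝ E] {f : α → E} {φ : α → ℝ} {a b : ℝ}

theorem Integrable.comp_smul_of_ae_mem_Icc (hf : Integrable f μ) (hφ : AEMeasurable φ μ)
    (hφab : ∀ᵐ x ∂μ, φ x ∈ Set.Icc a b) {g : ℝ → ℝ} (hg : Continuous g) :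
    Integrable (fun x => g (φ x) • f x) μ := by
  obtain ⟨C, hC⟩ := isCompact_Icc.exists_bound_of_continuousOn hg.continuousOn
  exact hf.bdd_smul C (hg.comp_aestronglyMeasurable hφ.aestronglyMeasurable)
    (hφab.mono fun x hx => hC _ hx)

theorem integral_polynomial_eval_smul_eq_zero (hf : Integrable f μ) (hφ : AEMeasurable φ μ)
    (hφab : ∀ᵐ x ∂μ, φ x ∈ Set.Icc a b) (hmom : ∀ n : ℕ, ∫ x, φ x ^ n • f x ∂μ = 0)
    (p : Polynomial ℝ) : ∫ x, p.eval (φ x) • f x ∂μ = 0 := by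
  simp_rw [Polynomial.eval_eq_sum_range, Finset.sum_smul, mul_smul]
  rw [integral_finsetSum (f := fun n x => p.coeff n • φ x ^ n • f x) _ fun n _ =>
    (hf.comp_smul_of_ae_mem_Icc hφ hφab (continuous_pow n)).smul (p.coeff n)]
  exact Finset.sum_eq_zero fun n _ => by rw [integral_smul, hmom, smul_zero]

theorem integral_comp_smul_eq_zero_of_moments_eq_zero (hf : Integrable f μ)
    (hφ : AEMeasurable φ μ) (hφab : ∀ᵐ x ∂μ, φ x ∈ Set.Icc a b)
    (hmom : ∀ n : ℕ, ∫ x, φ x ^ n • f x ∂μ = 0) {g : ℝ → ℝ} (hg : Continuous g) :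
    ∫ x, g (φ x) • f x ∂μ = 0 := by
  set B := ∫ x, ‖f x‖ ∂μ
  have hB : 0 ≤ B := integral_nonneg fun _ => norm_nonneg _
  refine norm_le_zero_iff.mp (le_of_forall_pos_le_add fun ε hε => ?_)
  set δ := ε / (B + 1)
  obtain ⟨p, hp⟩ := exists_polynomial_near_of_continuousOn a b g hg.continuousOn δ
    (div_pos hε (by linarith))
  have hsub : ∫ x, g (φ x) • f x ∂μ = ∫ x, (g (φ x) - p.eval (φ x)) • f x ∂μ := by
    simp_rw [sub_smul]
    rw [integral_sub (hf.comp_smul_of_ae_mem_Icc hφ hφab hg)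
      (hf.comp_smul_of_ae_mem_Icc hφ hφab p.continuous),
      integral_polynomial_eval_smul_eq_zero hf hφ hφab hmom, sub_zero]
  calc ‖∫ x, g (φ x) • f x ∂μ‖
      ≤ ∫ x, δ * ‖f x‖ ∂μ := by
        rw [hsub]
        refine norm_integral_le_of_norm_le (hf.norm.const_mul δ) ?_
        filter_upwards [hφab] with x hx
        rw [norm_smul, Real.norm_eq_abs, abs_sub_comm]
        exact mul_le_mul_of_nonneg_right (hp _ hx).le (norm_nonneg _)
    _ = δ * B := integral_const_mul δ _
    _ ≤ 0 + ε := by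
        rw [zero_add, div_mul_eq_mul_div, div_le_iff₀ (by linarith)]
        nlinarith

end Moments

theorem IntegrableOn.mul_cexp_neg {F : ℝ → ℂ} (hF : IntegrableOn F (Set.Ioi 0)) :
    IntegrableOn (fun t => F t * cexp (-t)) (Set.Ioi 0) := by
  refine hF.mul_bdd (by fun_prop) (c := 1) (ae_restrict_of_forall_mem measurableSet_Ioi ?_)
  intro t ht
  rw [Complex.norm_exp, neg_re, ofReal_re, Real.exp_le_one_iff, neg_nonpos]
  exact le_of_lt ht

theorem integral_smul_eq_zero_of_exp_neg_moments_eq_zero {E : Type*} [NormedAddCommGroup E]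
    [NormedSpace ℝ E] {f : ℝ → E} (hf : IntegrableOn f (Set.Ioi 0))
    (hmom : ∀ n : ℕ, ∫ t in Set.Ioi 0, Real.exp (-t) ^ n • f t = 0) {ψ : ℝ → ℝ}
    (hψ : Continuous ψ) (hsupp : HasCompactSupport ψ) (hsub : tsupport ψ ⊆ Set.Ioi 0) :
    ∫ t, ψ t • f t = 0 := by
  have hψ0 : ∀ t ∉ Set.Ioi 0, ψ t = 0 := fun t ht =>
    image_eq_zero_of_notMem_tsupport (mt (@hsub t) ht)
  have hexp : ∀ t ∈ Set.Ioi (0 : ℝ), Real.exp (-t) ∈ Set.Icc 0 1 := fun t ht =>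
    ⟨(Real.exp_pos _).le, Real.exp_le_one_iff.mpr (neg_nonpos.mpr (le_of_lt ht))⟩
  rw [← setIntegral_eq_integral_of_forall_compl_eq_zero fun t ht => by simp [hψ0 t ht]]
  simpa only [Real.log_exp, neg_neg] using integral_comp_smul_eq_zero_of_moments_eq_zero hf
    (by fun_prop) (ae_restrict_of_forall_mem measurableSet_Ioi hexp) hmom
    (hsupp.continuous_comp_neg_log hψ (hψ0 0 (lt_irrefl (0 : ℝ))))

end MeasureTheory

theorem laplace_transform_injective (F : ℝ → ℂ)
    (hF : IntegrableOn F (Set.Ioi 0))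
    (hvanish : ∀ μ : ℝ, 0 < μ →
      (∫ t in Set.Ioi (0:ℝ), F t * Complex.exp (-(μ:ℂ) * t)) = 0) :
    ∀ᵐ t ∂(volume.restrict (Set.Ioi (0:ℝ))), F t = 0 := by
  set f : ℝ → ℂ := fun t => F t * cexp (-t)
  have hf : IntegrableOn f (Set.Ioi 0) := hF.mul_cexp_neg
  have hmom : ∀ n : ℕ, ∫ t in Set.Ioi 0, Real.exp (-t) ^ n • f t = 0 := by
    intro n
    rw [← hvanish (n + 1) (by positivity)]
    congr 1 with t
    simp only [f, real_smul, ofReal_pow, ofReal_exp, ← Complex.exp_nat_mul]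
    rw [mul_left_comm, ← Complex.exp_add]
    push_cast
    ring_nf
  have hf0 := isOpen_Ioi.ae_eq_zero_of_integral_contDiff_smul_eq_zero hf.locallyIntegrableOn
    fun ψ hψ hsupp hsub => integral_smul_eq_zero_of_exp_neg_moments_eq_zero hf hmom
      hψ.continuous hsupp hsub
  rw [ae_restrict_iff' measurableSet_Ioi]
  filter_upwards [hf0] with t ht ht0
  exact (mul_eq_zero.mp (ht ht0)).resolve_right (Complex.exp_ne_zero _)
end

section
/- Let T > 0, R > 0 and let Q : ℝ² → ℂ be an essentially bounded measurable function supported in [0,T] × [−R,R]. If the Fourier transform of Q, F Q(ξ₁, ξ₂) = ∫_{ℝ²} Q(t,x₁) e^{−i(ξ₁ t + ξ₂ x₁)} dt dx₁, vanishes on the set {(μ, βμ) : μ ∈ ℝ, β ∈ [1/2, 1]}, then Q = 0 almost everywhere. -/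
/-! For real `a ≠ 0` the map `w ↦ F Q (a, w)` extends to an entire function (Q has compact
support) vanishing on the segment `{β a : β ∈ [1/2, 1]}`, hence everywhere by the identity theorem.
For each `w`, `z ↦ F Q (z, w)` is then entire and vanishes on `ℝ \ {0}`, hence everywhere. So the
Fourier transform of the integrable function `Q` vanishes identically, and `Q = 0` a.e. by
uniqueness of the Fourier transform on `L¹`. -/

open MeasureTheory Complex Filter Topology Function Metric
open scoped FourierTransform RealInnerProductSpace SchwartzMap

theorem MeasureTheory.Integrable.ae_eq_zero_of_fourier_eq_zero {V F : Type*}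
    [NormedAddCommGroup V] [InnerProductSpace ℝ V] [FiniteDimensional ℝ V] [MeasurableSpace V]
    [BorelSpace V] [NormedAddCommGroup F] [NormedSpace ℂ F] [CompleteSpace F] {f : V → F}
    (hf : Integrable f) (h𝓕 : 𝓕 f = 0) : f =ᵐ[volume] 0 := by
  refine ae_eq_zero_of_integral_contDiff_smul_eq_zero hf.locallyIntegrable fun g hg hgc => ?_
  let φ : 𝓢(V, ℂ) := (hgc.comp_left (g := ofRealCLM) rfl).toSchwartzMap (by fun_prop)
  let ψ : 𝓢(V, ℂ) := 𝓕⁻ φ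
  have hψ : 𝓕 (ψ : V → ℂ) = φ := by
    rw [← SchwartzMap.fourier_coe, FourierTransform.fourier_fourierInv_eq]
  calc ∫ x, g x • f x = ∫ x, 𝓕 (ψ : V → ℂ) x • f x := by
        rw [hψ]
        refine integral_congr_ae (Eventually.of_forall fun x => ?_)
        simp [φ]
    _ = ∫ ξ, ψ ξ • 𝓕 f ξ := by
        simpa using! VectorFourier.integral_fourierIntegral_smul_eq_flip (L := innerₗ V)
          Real.continuous_fourierChar continuous_inner ψ.integrable hf
    _ = 0 := by simp [h𝓕]

section ParametricIntegral

variable {X : Type*} [TopologicalSpace X] [T2Space X] [MeasurableSpace X] [OpensMeasurableSpace X]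
  {μ : Measure X} {f : X → ℂ}

lemma MeasureTheory.Integrable.mul_continuous_of_hasCompactSupport (hf : Integrable f μ)
    (hfc : HasCompactSupport f) {g : X → ℂ} (hg : Continuous g) :
    Integrable (fun x => f x * g x) μ := by
  rw [← integrableOn_iff_integrable_of_support_subset
    ((support_mul_subset_left f g).trans (subset_tsupport f))]
  exact hf.integrableOn.mul_continuousOn hg.continuousOn hfc

lemma hasDerivAt_integral_mul_of_hasCompactSupport (hf : Integrable f μ)
    (hfc : HasCompactSupport f) {g g' : ℂ → X → ℂ} (hg : ∀ z, Continuous (g z))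
    (hg' : Continuous (uncurry g')) (hderiv : ∀ z x, HasDerivAt (g · x) (g' z x) z) (z₀ : ℂ) :
    HasDerivAt (fun z => ∫ x, f x * g z x ∂μ) (∫ x, f x * g' z₀ x ∂μ) z₀ := by
  obtain ⟨M, hM⟩ :=
    ((isCompact_closedBall z₀ 1).prod hfc).exists_bound_of_continuousOn hg'.continuousOn
  have h_bound : ∀ x, ∀ z ∈ ball z₀ 1, ‖f x * g' z x‖ ≤ ‖f x‖ * M := by
    intro x z hz
    by_cases hx : x ∈ tsupport f
    · rw [norm_mul]
      exact mul_le_mul_of_nonneg_left (hM (z, x) ⟨ball_subset_closedBall hz, hx⟩) (norm_nonneg _)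
    · simp [image_eq_zero_of_notMem_tsupport hx]
  exact (hasDerivAt_integral_of_dominated_loc_of_deriv_le (ball_mem_nhds z₀ one_pos)
    (.of_forall fun z => (hf.mul_continuous_of_hasCompactSupport hfc (hg z)).aestronglyMeasurable)
    (hf.mul_continuous_of_hasCompactSupport hfc (hg z₀))
    (hf.mul_continuous_of_hasCompactSupport hfc
      (hg'.comp (continuous_const.prodMk continuous_id))).aestronglyMeasurable
    (.of_forall h_bound) (hf.norm.mul_const M)
    (.of_forall fun x z _ => (hderiv z x).const_mul (f x))).2

end ParametricIntegral

lemma Differentiable.eq_zero_of_frequently_ofReal_mul_eq_zero {E : Type*} [NormedAddCommGroup E]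
    [NormedSpace ℂ E] [CompleteSpace E] {f : ℂ → E} (hf : Differentiable ℂ f) {w : ℂ} (hw : w ≠ 0)
    {t₀ : ℝ} (h : ∃ᶠ t : ℝ in 𝓝[≠] t₀, f (t * w) = 0) : f = 0 := by
  have hlim : Tendsto (fun t : ℝ => (t : ℂ) * w) (𝓝[≠] t₀) (𝓝[≠] (t₀ * w)) :=
    tendsto_nhdsWithin_of_tendsto_nhds_of_eventually_within _
      (((continuous_ofReal.mul continuous_const).tendsto t₀).mono_left nhdsWithin_le_nhds)
      (eventually_nhdsWithin_of_forall fun t ht => by simpa [hw] using ht)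
  funext z
  exact (analyticOnNhd_univ_iff_differentiable.2 hf).eqOn_zero_of_preconnected_of_frequently_eq_zero
    isPreconnected_univ (Set.mem_univ _) (hlim.frequently h) (Set.mem_univ z)

noncomputable def euclideanSpaceFinTwoEquivProd : EuclideanSpace ℝ (Fin 2) ≃ᵐ ℝ × ℝ :=
  (MeasurableEquiv.toLp 2 (Fin 2 → ℝ)).symm.trans MeasurableEquiv.finTwoArrow

lemma measurePreserving_euclideanSpaceFinTwoEquivProd :
    MeasurePreserving euclideanSpaceFinTwoEquivProd :=
  (volume_preserving_finTwoArrow ℝ).comp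
    (EuclideanSpace.volume_preserving_symm_measurableEquiv_toLp (Fin 2))

@[simp]
lemma euclideanSpaceFinTwoEquivProd_apply (v : EuclideanSpace ℝ (Fin 2)) :
    euclideanSpaceFinTwoEquivProd v = (v 0, v 1) :=
  rfl

-- The paper's `F Q` (no factor `2π` in the exponent, unlike `𝓕`), at complex frequencies.
noncomputable def fourierLaplace (Q : ℝ × ℝ → ℂ) (z w : ℂ) : ℂ :=
  ∫ p : ℝ × ℝ, Q p * cexp (-I * (z * p.1 + w * p.2))

section

variable {Q : ℝ × ℝ → ℂ}

lemma differentiable_fourierLaplace_left (hQ : Integrable Q) (hQc : HasCompactSupport Q) (w : ℂ) :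
    Differentiable ℂ (fourierLaplace Q · w) := fun z₀ =>
  (hasDerivAt_integral_mul_of_hasCompactSupport hQ hQc (by fun_prop)
    (g' := fun z p => cexp (-I * (z * p.1 + w * p.2)) * (-I * p.1)) (by fun_prop)
    (fun z p => by
      simpa using (((hasDerivAt_id z).mul_const (p.1 : ℂ)).add_const _).const_mul (-I) |>.cexp)
    z₀).differentiableAt

lemma differentiable_fourierLaplace_right (hQ : Integrable Q) (hQc : HasCompactSupport Q) (z : ℂ) :
    Differentiable ℂ (fourierLaplace Q z) := fun w₀ =>
  (hasDerivAt_integral_mul_of_hasCompactSupport hQ hQc (by fun_prop)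
    (g' := fun w p => cexp (-I * (z * p.1 + w * p.2)) * (-I * p.2)) (by fun_prop)
    (fun w p => by
      simpa using (((hasDerivAt_id w).mul_const (p.2 : ℂ)).const_add _).const_mul (-I) |>.cexp)
    w₀).differentiableAt

lemma fourierLaplace_eq_zero_of_eq_zero_on_cone (hQ : Integrable Q) (hQc : HasCompactSupport Q)
    {s : Set ℝ} {β₀ : ℝ} (hs : AccPt β₀ (𝓟 s))
    (hvanish : ∀ a β : ℝ, β ∈ s → fourierLaplace Q a (β * a) = 0) (z w : ℂ) :
    fourierLaplace Q z w = 0 := by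
  have h_line : ∀ a : ℝ, a ≠ 0 → fourierLaplace Q a = 0 := fun a ha =>
    (differentiable_fourierLaplace_right hQ hQc a).eq_zero_of_frequently_ofReal_mul_eq_zero
      (ofReal_ne_zero.2 ha) ((accPt_iff_frequently_nhdsNE.1 hs).mono (hvanish a))
  have h_col : (fourierLaplace Q · w) = 0 :=
    (differentiable_fourierLaplace_left hQ hQc w).eq_zero_of_frequently_ofReal_mul_eq_zero
      one_ne_zero (t₀ := 1)
      ((eventually_nhdsWithin_of_eventually_nhds (eventually_ne_nhds one_ne_zero)).frequently.mono
        fun t ht => by simpa using congrFun (h_line t ht) w)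
  exact congrFun h_col z

lemma fourier_comp_euclideanSpaceFinTwoEquivProd (ξ : EuclideanSpace ℝ (Fin 2)) :
    𝓕 (Q ∘ euclideanSpaceFinTwoEquivProd) ξ =
      fourierLaplace Q (2 * Real.pi * ξ 0 : ℝ) (2 * Real.pi * ξ 1 : ℝ) := by
  rw [Real.fourier_eq', fourierLaplace,
    ← measurePreserving_euclideanSpaceFinTwoEquivProd.integral_comp']
  refine integral_congr_ae (Eventually.of_forall fun v => ?_)
  simp only [comp_apply, smul_eq_mul, PiLp.inner_apply, Fin.sum_univ_two, RCLike.inner_apply,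
    conj_trivial, euclideanSpaceFinTwoEquivProd_apply]
  rw [mul_comm]
  congr 2
  push_cast
  ring

lemma ae_eq_zero_of_fourierLaplace_ofReal_eq_zero (hQ : Integrable Q)
    (h : ∀ a b : ℝ, fourierLaplace Q a b = 0) : Q =ᵐ[volume] 0 := by
  have he := measurePreserving_euclideanSpaceFinTwoEquivProd
  have hQe : Q ∘ euclideanSpaceFinTwoEquivProd =ᵐ[volume] 0 :=
    ((he.integrable_comp_emb euclideanSpaceFinTwoEquivProd.measurableEmbedding).2 hQ
      ).ae_eq_zero_of_fourier_eq_zero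
      (funext fun ξ => (fourier_comp_euclideanSpaceFinTwoEquivProd ξ).trans (h _ _))
  have := (he.symm _).quasiMeasurePreserving.ae_eq_comp hQe
  rwa [comp_assoc, MeasurableEquiv.self_comp_symm, comp_id, Pi.zero_comp] at this

end

theorem fourier_vanish_on_cone_implies_zero_general (T R : ℝ)
    (Q : ℝ × ℝ → ℂ) (hmeas : Measurable Q)
    (hbdd : ∃ C : ℝ, ∀ p, ‖Q p‖ ≤ C)
    (hsupp : Function.support Q ⊆ Set.Icc 0 T ×ˢ Set.Icc (-R) R)
    (hvanish : ∀ μ β : ℝ, β ∈ Set.Icc (1/2 : ℝ) 1 →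
      (∫ p : ℝ × ℝ, Q p * Complex.exp (-Complex.I * (μ * p.1 + (β * μ) * p.2))) = 0) :
    ∀ᵐ p : ℝ × ℝ, Q p = 0 := by
  obtain ⟨C, hC⟩ := hbdd
  have hK : IsCompact (Set.Icc 0 T ×ˢ Set.Icc (-R) R) := isCompact_Icc.prod isCompact_Icc
  have hQ : Integrable Q := (integrableOn_iff_integrable_of_support_subset hsupp).1
    (Measure.integrableOn_of_bounded hK.measure_lt_top.ne hmeas.aestronglyMeasurable
      (.of_forall hC))
  have hs : AccPt (3 / 4 : ℝ) (𝓟 (Set.Icc (1 / 2) 1)) := accPt_iff_frequently_nhdsNE.2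
    (eventually_nhdsWithin_of_eventually_nhds (Icc_mem_nhds (by norm_num) (by norm_num))).frequently
  exact ae_eq_zero_of_fourierLaplace_ofReal_eq_zero hQ fun a b =>
    fourierLaplace_eq_zero_of_eq_zero_on_cone hQ (.of_support_subset_isCompact hK hsupp) hs
      hvanish a b

theorem fourier_vanish_on_cone_implies_zero (T R : ℝ) (hT : 0 < T) (hR : 0 < R)
    (Q : ℝ × ℝ → ℂ) (hmeas : Measurable Q)
    (hbdd : ∃ C : ℝ, ∀ p, ‖Q p‖ ≤ C)
    (hsupp : Function.support Q ⊆ Set.Icc 0 T ×ˢ Set.Icc (-R) R)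
    (hvanish : ∀ μ β : ℝ, β ∈ Set.Icc (1/2 : ℝ) 1 →
      (∫ p : ℝ × ℝ, Q p * Complex.exp (-Complex.I * (μ * p.1 + (β * μ) * p.2))) = 0) :
    ∀ᵐ p : ℝ × ℝ, Q p = 0 :=
  fourier_vanish_on_cone_implies_zero_general T R Q hmeas hbdd hsupp hvanish
end
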